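/- Let n ≥ 3 and m ≥ 1 be integers, λ > 0 and K ≥ 0 real numbers, and let ψ : ℝⁿ → ℝᵐ be C² on a neighborhood of a point x ∈ ℝⁿ. Assume that at x the equation −Δψ(x) + (λ/(4(n−2)))‖ψ(x)‖² ψ(x) = λ² ψ(x) holds (Δ acting componentwise), and that −Δ(‖ψ‖²)(x) ≥ −K ‖ψ(x)‖². Then Σ_{i=1}^{n} ‖∂_i ψ(x)‖² ≤ ( K/2 + λ² − (λ/(4(n−2)))‖ψ(x)‖² ) ‖ψ(x)‖². -/

import Mathlib

/-- The componentwise Euclidean Laplacian `Δψ(x) = ∑ i ∂²ψ/∂xᵢ²(x)`. -/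
noncomputable def euclideanLaplacian {n : ℕ} {F : Type*} [NormedAddCommGroup F]
    [NormedSpace ℝ F] (ψ : EuclideanSpace ℝ (Fin n) → F) (x : EuclideanSpace ℝ (Fin n)) : F :=
  ∑ i : Fin n,
    fderiv ℝ (fun y => fderiv ℝ ψ y (EuclideanSpace.single i 1)) x (EuclideanSpace.single i 1)

/-! Pairing the equation with `ψ(x)` gives `⟪ψ, Δψ⟫ = (R/4 - λ²)‖ψ‖²` with
`R/4 = λ‖ψ(x)‖²/(4(n-2))`, and the product rule `Δ‖ψ‖² = 2 ∑ᵢ ‖∂ᵢψ‖² + 2 ⟪ψ, Δψ⟫` turns the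
hypothesis `Δ‖ψ‖² ≤ K‖ψ‖²` into the bound. -/

open scoped RealInnerProductSpace Topology

section SecondDerivative

variable {E F : Type*} [NormedAddCommGroup E] [NormedSpace ℝ E]
  [NormedAddCommGroup F] [InnerProductSpace ℝ F] {ψ : E → F} {x : E}

theorem fderiv_norm_sq_comp_apply (hψ : DifferentiableAt ℝ ψ x) (v : E) :
    fderiv ℝ (fun z => ‖ψ z‖ ^ 2) x v = 2 * ⟪ψ x, fderiv ℝ ψ x v⟫ := by
  rw [hψ.hasFDerivAt.norm_sq.fderiv]
  simp

theorem ContDiffAt.fderiv_fderiv_norm_sq_apply (hψ : ContDiffAt ℝ 2 ψ x) (v : E) :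
    fderiv ℝ (fun y => fderiv ℝ (fun z => ‖ψ z‖ ^ 2) y v) x v
      = 2 * ‖fderiv ℝ ψ x v‖ ^ 2 + 2 * ⟪ψ x, fderiv ℝ (fun y => fderiv ℝ ψ y v) x v⟫ := by
  have hfirst : (fun y => fderiv ℝ (fun z => ‖ψ z‖ ^ 2) y v)
      =ᶠ[𝓝 x] fun y => 2 * ⟪ψ y, fderiv ℝ ψ y v⟫ := by
    filter_upwards [hψ.eventually (by simp)] with y hy
    exact fderiv_norm_sq_comp_apply (hy.differentiableAt two_ne_zero) v
  have hψ' : DifferentiableAt ℝ ψ x := hψ.differentiableAt two_ne_zero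
  have hdψ : DifferentiableAt ℝ (fun y => fderiv ℝ ψ y v) x :=
    ((hψ.fderiv_right (m := 1) le_rfl).differentiableAt one_ne_zero).clm_apply (differentiableAt_const v)
  rw [hfirst.fderiv_eq, fderiv_const_mul (hψ'.inner ℝ hdψ), smul_apply,
    fderiv_inner_apply ℝ hψ' hdψ, real_inner_self_eq_norm_sq, smul_eq_mul]
  ring

end SecondDerivative

theorem euclideanLaplacian_norm_sq {n : ℕ} {F : Type*} [NormedAddCommGroup F]
    [InnerProductSpace ℝ F] {ψ : EuclideanSpace ℝ (Fin n) → F} {x : EuclideanSpace ℝ (Fin n)}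
    (hψ : ContDiffAt ℝ 2 ψ x) :
    euclideanLaplacian (fun y => ‖ψ y‖ ^ 2) x
      = 2 * ∑ i, ‖fderiv ℝ ψ x (EuclideanSpace.single i 1)‖ ^ 2
        + 2 * ⟪ψ x, euclideanLaplacian ψ x⟫ := by
  simp only [euclideanLaplacian, hψ.fderiv_fderiv_norm_sq_apply, Finset.sum_add_distrib,
    ← Finset.mul_sum, inner_sum]

theorem gradient_bound_einstein_spinor_general
    (n m : ℕ) (lam K : ℝ)
    (ψ : EuclideanSpace ℝ (Fin n) → EuclideanSpace ℝ (Fin m))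
    (x : EuclideanSpace ℝ (Fin n)) (hψ : ContDiffAt ℝ 2 ψ x)
    (heq : -euclideanLaplacian ψ x + (lam / (4 * ((n : ℝ) - 2)) * ‖ψ x‖ ^ 2) • ψ x
      = (lam ^ 2) • ψ x)
    (hlap : -euclideanLaplacian (fun y => ‖ψ y‖ ^ 2) x ≥ -K * ‖ψ x‖ ^ 2) :
    ∑ i : Fin n, ‖fderiv ℝ ψ x (EuclideanSpace.single i 1)‖ ^ 2
      ≤ (K / 2 + lam ^ 2 - lam / (4 * ((n : ℝ) - 2)) * ‖ψ x‖ ^ 2) * ‖ψ x‖ ^ 2 := by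
  have hpair : ⟪ψ x, euclideanLaplacian ψ x⟫
      = (lam / (4 * ((n : ℝ) - 2)) * ‖ψ x‖ ^ 2 - lam ^ 2) * ‖ψ x‖ ^ 2 := by
    have h := congrArg (⟪ψ x, ·⟫) heq
    simp only [inner_add_right, inner_neg_right, real_inner_smul_right,
      real_inner_self_eq_norm_sq] at h
    linarith
  rw [euclideanLaplacian_norm_sq hψ, hpair] at hlap
  linarith

/-- pointwise gradient bound for a solution of the Einstein–Dirac-type
equation under the condition `−Δ(‖ψ‖²)(x) ≥ −K‖ψ(x)‖²`:
`∑ᵢ ‖∂ᵢψ(x)‖² ≤ (K/2 + λ² − (λ/(4(n−2)))‖ψ(x)‖²)‖ψ(x)‖²`. -/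
theorem gradient_bound_einstein_spinor
    (n m : ℕ) (hn : 3 ≤ n) (hm : 1 ≤ m) (lam K : ℝ) (hlam : 0 < lam) (hK : 0 ≤ K)
    (ψ : EuclideanSpace ℝ (Fin n) → EuclideanSpace ℝ (Fin m))
    (x : EuclideanSpace ℝ (Fin n)) (hψ : ContDiffAt ℝ 2 ψ x)
    (heq : -euclideanLaplacian ψ x + (lam / (4 * ((n : ℝ) - 2)) * ‖ψ x‖ ^ 2) • ψ x
      = (lam ^ 2) • ψ x)
    (hlap : -euclideanLaplacian (fun y => ‖ψ y‖ ^ 2) x ≥ -K * ‖ψ x‖ ^ 2) :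
    ∑ i : Fin n, ‖fderiv ℝ ψ x (EuclideanSpace.single i 1)‖ ^ 2
      ≤ (K / 2 + lam ^ 2 - lam / (4 * ((n : ℝ) - 2)) * ‖ψ x‖ ^ 2) * ‖ψ x‖ ^ 2 :=
  gradient_bound_einstein_spinor_general n m lam K ψ x hψ heq hlap
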